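/- If subspaces K and L of H are both copyable along δ_e and K ⊓ L = ⊥, then K and L are orthogonal: for all x ∈ K and y ∈ L one has ⟪x, y⟫_ℂ = 0. (This is the Booleanness criterion used in the proof that the copyable kernels form a Boolean subalgebra.) -/

import Mathlib

/-!
Copyability of `K` gives `δ_e (P_K e_j) = P_K e_j ⊗ P_K e_j`. Comparing coefficients in the
product basis `e_i ⊗ e_k` shows that the only vectors copied by `δ_e` are `0` and the basis
vectors, and self-adjointness of `P_K` then forces `P_K e_j ∈ {e_j, 0}`. A basis vector fixed by
both `P_K` and `P_L` would lie in `K ⊓ L = ⊥`, so `P_K P_L` kills every `e_j`, hence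
`P_K P_L = 0` and `⟪x, y⟫ = ⟪x, P_K P_L y⟫ = 0`.
-/

open scoped TensorProduct InnerProductSpace

/-- The orthogonal projection of `H` onto the subspace `K`, regarded as an endomorphism
`P_K : H →ₗ[ℂ] H`. -/
noncomputable def projL {H : Type*} [NormedAddCommGroup H] [InnerProductSpace ℂ H]
    [FiniteDimensional ℂ H] (K : Submodule ℂ H) : H →ₗ[ℂ] H :=
  K.subtype ∘ₗ K.orthogonalProjectionOnto.toLinearMap

/-- The classical structure `δ_e : H →ₗ[ℂ] H ⊗[ℂ] H` associated with an orthonormal basis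
`e`, determined by `δ_e x = ∑ i, ⟪e i, x⟫_ℂ • (e i ⊗ₜ e i)`. -/
noncomputable def delta {ι H : Type*} [Fintype ι] [NormedAddCommGroup H]
    [InnerProductSpace ℂ H] (e : ι → H) : H →ₗ[ℂ] H ⊗[ℂ] H :=
  ∑ i, (innerSL ℂ (e i)).toLinearMap.smulRight (e i ⊗ₜ[ℂ] e i)

/-- A subspace `K` of `H` is copyable along `δ_e` if `δ_e ∘ₗ P_K = (P_K ⊗ P_K) ∘ₗ δ_e`. -/
def Copyable {ι H : Type*} [Fintype ι] [NormedAddCommGroup H] [InnerProductSpace ℂ H]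
    [FiniteDimensional ℂ H] (e : ι → H) (K : Submodule ℂ H) : Prop :=
  delta e ∘ₗ projL K = TensorProduct.map (projL K) (projL K) ∘ₗ delta e

section

variable {ι H : Type*} [Fintype ι] [NormedAddCommGroup H] [InnerProductSpace ℂ H]

lemma delta_apply (e : ι → H) (x : H) :
    delta e x = ∑ i, ⟪e i, x⟫_ℂ • (e i ⊗ₜ[ℂ] e i) := by
  simp [delta, LinearMap.sum_apply]

lemma delta_apply_of_orthonormal {e : ι → H} (he : Orthonormal ℂ e) (j : ι) :
    delta e (e j) = e j ⊗ₜ[ℂ] e j := by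
  classical
  simp [delta_apply, orthonormal_iff_ite.1 he, ite_smul]

lemma inner_mul_inner_of_delta_eq_tmul [DecidableEq ι] {e : ι → H} (he : Orthonormal ℂ e)
    {v : H} (hv : delta e v = v ⊗ₜ[ℂ] v) (i k : ι) :
    ⟪e i, v⟫_ℂ * ⟪e k, v⟫_ℂ = if i = k then ⟪e k, v⟫_ℂ else 0 := by
  have h := congrArg (LinearMap.mul' ℂ ℂ ∘ₗ
    TensorProduct.map (innerSL ℂ (e i)).toLinearMap (innerSL ℂ (e k)).toLinearMap) hv
  simp only [delta_apply, LinearMap.comp_apply, map_sum, map_smul, TensorProduct.map_tmul,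
    LinearMap.mul'_apply, ContinuousLinearMap.coe_coe, innerSL_apply_apply,
    orthonormal_iff_ite.1 he, smul_eq_mul, mul_ite, mul_one, mul_zero,
    Finset.sum_ite_eq, Finset.mem_univ, if_true] at h
  exact h.symm

lemma eq_zero_or_exists_eq_of_delta_eq_tmul (e : OrthonormalBasis ι ℂ H) {v : H}
    (hv : delta e v = v ⊗ₜ[ℂ] v) : v = 0 ∨ ∃ i, v = e i := by
  classical
  have hc := inner_mul_inner_of_delta_eq_tmul e.orthonormal hv
  by_cases hzero : ∀ k, ⟪e k, v⟫_ℂ = 0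
  · left
    exact InnerProductSpace.ext_inner_left_basis e.toBasis fun k => by simp [hzero]
  push Not at hzero
  obtain ⟨i, hi⟩ := hzero
  right
  refine ⟨i, InnerProductSpace.ext_inner_left_basis e.toBasis fun k => ?_⟩
  rw [e.coe_toBasis, orthonormal_iff_ite.1 e.orthonormal]
  split_ifs with hki
  · subst hki
    have hsq : ⟪e k, v⟫_ℂ * ⟪e k, v⟫_ℂ = ⟪e k, v⟫_ℂ * 1 := by rw [hc, if_pos rfl, mul_one]
    exact mul_left_cancel₀ hi hsq
  · simpa [hi, Ne.symm hki] using hc i k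

end

section

variable {ι H : Type*} [Fintype ι] [NormedAddCommGroup H] [InnerProductSpace ℂ H]
  [FiniteDimensional ℂ H] {K L : Submodule ℂ H}

lemma projL_apply (K : Submodule ℂ H) (x : H) : projL K x = K.starProjection x := rfl

lemma Copyable.projL_basis_eq_self_or_eq_zero {e : OrthonormalBasis ι ℂ H}
    (hK : Copyable (⇑e) K) (j : ι) : projL K (e j) = e j ∨ projL K (e j) = 0 := by
  have hcopy : delta e (projL K (e j)) = projL K (e j) ⊗ₜ[ℂ] projL K (e j) := by
    rw [← LinearMap.comp_apply, hK, LinearMap.comp_apply,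
      delta_apply_of_orthonormal e.orthonormal, TensorProduct.map_tmul]
  refine (eq_zero_or_exists_eq_of_delta_eq_tmul e hcopy).symm.imp (fun ⟨i, hi⟩ => ?_) id
  -- `P (e j) = e i` forces `i = j`, since `⟪e i, e j⟫ = ⟪P (e i), e j⟫ = ⟪e i, P (e j)⟫ = 1`.
  have hmem : e i ∈ K := hi ▸ K.starProjection_apply_mem (e j)
  have hinner : ⟪e i, e j⟫_ℂ = 1 := by
    rw [← Submodule.starProjection_eq_self_iff.2 hmem,
      Submodule.inner_starProjection_left_eq_right, ← projL_apply, hi,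
      inner_self_eq_one_of_norm_eq_one (e.orthonormal.1 i)]
  have hij : i = j := by
    by_contra hne
    rw [e.orthonormal.2 hne] at hinner
    exact zero_ne_one hinner
  rw [hi, hij]

lemma Copyable.projL_comp_projL_eq_zero {e : OrthonormalBasis ι ℂ H}
    (hK : Copyable (⇑e) K) (hL : Copyable (⇑e) L) (hKL : K ⊓ L = ⊥) :
    projL K ∘ₗ projL L = 0 := by
  refine e.toBasis.ext fun j => ?_
  rw [e.coe_toBasis, LinearMap.comp_apply, LinearMap.zero_apply]
  rcases hL.projL_basis_eq_self_or_eq_zero j with hLj | hLj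
  · rcases hK.projL_basis_eq_self_or_eq_zero j with hKj | hKj
    · have hmem : e j ∈ K ⊓ L :=
        ⟨hKj ▸ K.starProjection_apply_mem _, hLj ▸ L.starProjection_apply_mem _⟩
      rw [hKL, Submodule.mem_bot] at hmem
      exact absurd hmem (e.orthonormal.ne_zero j)
    · rw [hLj, hKj]
  · rw [hLj, map_zero]

end

/-- If `K` and `L` are copyable along `δ_e` and `K ⊓ L = ⊥`, then `K` and `L` are
orthogonal: `⟪x, y⟫_ℂ = 0` for all `x ∈ K` and `y ∈ L`. -/
theorem copyable_disjoint_orthogonal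
    {ι H : Type*} [Fintype ι] [NormedAddCommGroup H] [InnerProductSpace ℂ H]
    [FiniteDimensional ℂ H] (e : OrthonormalBasis ι ℂ H) (K L : Submodule ℂ H)
    (hK : Copyable (⇑e) K) (hL : Copyable (⇑e) L) (hKL : K ⊓ L = ⊥) :
    ∀ x ∈ K, ∀ y ∈ L, ⟪x, y⟫_ℂ = 0 := by
  intro x hx y hy
  calc ⟪x, y⟫_ℂ = ⟪projL K x, projL L y⟫_ℂ := by
        rw [projL_apply, projL_apply, Submodule.starProjection_eq_self_iff.2 hx,
          Submodule.starProjection_eq_self_iff.2 hy]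
    _ = ⟪x, (projL K ∘ₗ projL L) y⟫_ℂ := Submodule.inner_starProjection_left_eq_right K x _
    _ = 0 := by rw [hK.projL_comp_projL_eq_zero hL hKL, LinearMap.zero_apply, inner_zero_right]
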